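/- Let 𝒢 be a family of triples (a,b,c) of functions on the unit disk, each meromorphic or identically ∞, and ε > 0 with σ(a(z),b(z))·σ(a(z),c(z))·σ(b(z),c(z)) ≥ ε for all (a,b,c) ∈ 𝒢 and all z ∈ 𝔻. Then each of the coordinate families {a : (a,b,c) ∈ 𝒢}, {b : (a,b,c) ∈ 𝒢}, {c : (a,b,c) ∈ 𝒢} is normal in 𝔻. -/

import Mathlib

open Complex OnePoint Filter Topology Metric

/-- Chordal metric on the Riemann sphere of diameter 2. -/
noncomputable def chordal : OnePoint ℂ → OnePoint ℂ → ℝ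
  | (z : ℂ), (w : ℂ) => 2 * ‖z - w‖ /
      (Real.sqrt (1 + ‖z‖ ^ 2) * Real.sqrt (1 + ‖w‖ ^ 2))
  | (z : ℂ), ∞ => 2 / Real.sqrt (1 + ‖z‖ ^ 2)
  | ∞, (w : ℂ) => 2 / Real.sqrt (1 + ‖w‖ ^ 2)
  | ∞, ∞ => 0

/-- Spherical (great-circle) metric on the Riemann sphere of diameter 2. -/
noncomputable def sphDist (x y : OnePoint ℂ) : ℝ := 2 * Real.arcsin (chordal x y / 2)

/-- Value of the quotient `p/q` on the Riemann sphere. -/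
noncomputable def toSph (p q : ℂ) : OnePoint ℂ :=
  if q = 0 then ∞ else ((p / q : ℂ) : OnePoint ℂ)

/-- A sphere-valued function is meromorphic on `U` (possibly `≡ ∞`) iff it is a quotient
of two holomorphic functions without common zeros. -/
def MeromorphicOnSph (U : Set ℂ) (a : ℂ → OnePoint ℂ) : Prop :=
  ∃ f g : ℂ → ℂ, DifferentiableOn ℂ f U ∧ DifferentiableOn ℂ g U ∧
    (∀ z ∈ U, ¬(f z = 0 ∧ g z = 0)) ∧ ∀ z ∈ U, a z = toSph (f z) (g z)

/-!
Spherical distances are at most `π`, so the product bound separates every pair of values: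
`χ ≥ 2ε / π³` for the chordal distance `χ`. Write `a = f₁ / g₁`, `b = f₂ / g₂`, `e = f₃ / g₃` with holomorphic pairs without common zeros. The
chordal distance of two such quotients is `2 |Wᵢⱼ| / (|(fᵢ, gᵢ)| |(fⱼ, gⱼ)|)` with the Wronskian
`Wᵢⱼ = fᵢ gⱼ - fⱼ gᵢ`, so pairwise separation makes every `Wᵢⱼ` zero-free and
`W₂₃ / (W₁₂ W₁₃)` has a holomorphic square root `s` on the disk. The pair `(s f₁, s g₁)` still
represents `a`, and `|s f₁|² + |s g₁|² = 2 χ(b, e) / (χ(a, b) χ(a, e))` lies between two constants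
depending only on the separation. A uniformly bounded sequence of holomorphic pairs has a locally
uniformly convergent subsequence (Cauchy estimates and Arzelà–Ascoli), its limit stays away from
`(0, 0)`, and so the quotients converge in the spherical metric.
-/

open scoped Real UniformConvergence

section Chordal

lemma chordal_nonneg (x y : OnePoint ℂ) : 0 ≤ chordal x y := by
  induction x using OnePoint.rec <;> induction y using OnePoint.rec <;> simp only [chordal] <;>
    positivity

lemma chordal_comm (x y : OnePoint ℂ) : chordal x y = chordal y x := by
  induction x using OnePoint.rec <;> induction y using OnePoint.rec <;> simp only [chordal]
  rw [norm_sub_rev, mul_comm (√_)]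

lemma one_le_sqrt_one_add_sq (z : ℂ) : 1 ≤ √(1 + ‖z‖ ^ 2) :=
  Real.one_le_sqrt.mpr (by nlinarith [sq_nonneg ‖z‖])

lemma chordal_le_two (x y : OnePoint ℂ) : chordal x y ≤ 2 := by
  induction x using OnePoint.rec <;> induction y using OnePoint.rec <;> simp only [chordal]
  · norm_num
  · exact div_le_self zero_le_two (one_le_sqrt_one_add_sq _)
  · exact div_le_self zero_le_two (one_le_sqrt_one_add_sq _)
  · rename_i z w
    rw [div_le_iff₀ (by positivity), ← Real.sqrt_mul (by positivity)]
    have : ‖z‖ + ‖w‖ ≤ √((1 + ‖z‖ ^ 2) * (1 + ‖w‖ ^ 2)) :=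
      Real.le_sqrt_of_sq_le (by nlinarith [sq_nonneg (‖z‖ * ‖w‖ - 1), sq_nonneg (‖z‖ - ‖w‖)])
    linarith [norm_sub_le z w]

lemma sphDist_comm (x y : OnePoint ℂ) : sphDist x y = sphDist y x := by
  rw [sphDist, sphDist, chordal_comm]

lemma sphDist_nonneg (x y : OnePoint ℂ) : 0 ≤ sphDist x y :=
  mul_nonneg zero_le_two (Real.arcsin_nonneg.mpr (by linarith [chordal_nonneg x y]))

lemma sphDist_le_pi (x y : OnePoint ℂ) : sphDist x y ≤ π := by
  rw [sphDist]
  linarith [Real.arcsin_le_pi_div_two (chordal x y / 2)]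

/-- Jordan's inequality `(2/π) θ ≤ sin θ` on `[0, π/2]`, read at `θ = arcsin (χ/2)`. -/
lemma sphDist_le_pi_div_two_mul_chordal (x y : OnePoint ℂ) :
    sphDist x y ≤ π / 2 * chordal x y := by
  have h₀ := chordal_nonneg x y
  have h₂ := chordal_le_two x y
  have hJ := Real.mul_le_sin (Real.arcsin_nonneg.mpr (by linarith : 0 ≤ chordal x y / 2))
    (Real.arcsin_le_pi_div_two _)
  rw [Real.sin_arcsin (by linarith) (by linarith), div_mul_eq_mul_div,
    div_le_iff₀ Real.pi_pos] at hJ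
  rw [sphDist]
  linarith

lemma le_chordal_of_le_sphDist_mul {x y z : OnePoint ℂ} {ε : ℝ}
    (h : ε ≤ sphDist x y * sphDist x z * sphDist y z) : 2 * ε / π ^ 3 ≤ chordal x y := by
  have hxz := sphDist_le_pi x z
  have hyz := sphDist_le_pi y z
  have : ε ≤ sphDist x y * π ^ 2 := by
    calc ε ≤ sphDist x y * (sphDist x z * sphDist y z) := by rwa [← mul_assoc]
      _ ≤ sphDist x y * π ^ 2 := by
        gcongr
        · exact sphDist_nonneg x y
        · rw [sq]; exact mul_le_mul hxz hyz (sphDist_nonneg y z) Real.pi_pos.le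
  rw [div_le_iff₀ (by positivity)]
  nlinarith [sphDist_le_pi_div_two_mul_chordal x y, Real.pi_pos]

lemma le_chordal_pairwise_of_le_sphDist_mul {x y z : OnePoint ℂ} {ε : ℝ}
    (h : ε ≤ sphDist x y * sphDist x z * sphDist y z) :
    2 * ε / π ^ 3 ≤ chordal x y ∧ 2 * ε / π ^ 3 ≤ chordal x z ∧
      2 * ε / π ^ 3 ≤ chordal y z := by
  refine ⟨le_chordal_of_le_sphDist_mul h,
    le_chordal_of_le_sphDist_mul (z := y) (h.trans_eq (by rw [sphDist_comm z y]; ring)),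
    le_chordal_of_le_sphDist_mul (z := x)
      (h.trans_eq (by rw [sphDist_comm y x, sphDist_comm z x]; ring))⟩

end Chordal

section Homogeneous

lemma norm_sq_add_norm_sq_pos_iff {p q : ℂ} : 0 < ‖p‖ ^ 2 + ‖q‖ ^ 2 ↔ ¬(p = 0 ∧ q = 0) := by
  constructor
  · rintro h ⟨rfl, rfl⟩
    simp at h
  · intro h
    rcases not_and_or.mp h with hp | hq
    · have := norm_pos_iff.mpr hp
      positivity
    · have := norm_pos_iff.mpr hq
      positivity

lemma sqrt_one_add_norm_div_sq {u v : ℂ} (hv : v ≠ 0) :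
    √(1 + ‖u / v‖ ^ 2) = √(‖u‖ ^ 2 + ‖v‖ ^ 2) / ‖v‖ := by
  have hv' : 0 < ‖v‖ := norm_pos_iff.mpr hv
  rw [← Real.sqrt_sq hv'.le, ← Real.sqrt_div' _ (sq_nonneg _), Real.sqrt_sq hv'.le, norm_div]
  congr 1
  field_simp
  ring

lemma chordal_toSph {p q p' q' : ℂ} (h : ¬(p = 0 ∧ q = 0)) (h' : ¬(p' = 0 ∧ q' = 0)) :
    chordal (toSph p q) (toSph p' q') =
      2 * ‖p * q' - p' * q‖ / (√(‖p‖ ^ 2 + ‖q‖ ^ 2) * √(‖p'‖ ^ 2 + ‖q'‖ ^ 2)) := by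
  rcases eq_or_ne q 0 with rfl | hq <;> rcases eq_or_ne q' 0 with rfl | hq'
  · simp [toSph, chordal]
  · have hp : p ≠ 0 := by simpa using h
    simp only [toSph, if_pos, if_neg hq', chordal, sqrt_one_add_norm_div_sq hq', mul_zero,
      sub_zero, norm_mul, norm_zero, ne_eq, OfNat.ofNat_ne_zero,
      not_false_eq_true, zero_pow, add_zero, Real.sqrt_sq (norm_nonneg p)]
    field_simp
  · have hp' : p' ≠ 0 := by simpa using h'
    simp only [toSph, if_pos, if_neg hq, chordal, sqrt_one_add_norm_div_sq hq, mul_zero,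
      zero_sub, norm_neg, norm_mul, norm_zero, ne_eq, OfNat.ofNat_ne_zero,
      not_false_eq_true, zero_pow, add_zero, Real.sqrt_sq (norm_nonneg p')]
    field_simp
  · simp only [toSph, if_neg hq, if_neg hq', chordal, sqrt_one_add_norm_div_sq hq,
      sqrt_one_add_norm_div_sq hq']
    rw [div_sub_div _ _ hq hq', norm_div, norm_mul]
    field_simp

lemma toSph_mul {s : ℂ} (hs : s ≠ 0) (p q : ℂ) : toSph (s * p) (s * q) = toSph p q := by
  simp only [toSph, mul_eq_zero, hs, false_or, mul_div_mul_left _ _ hs]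

lemma chordal_toSph_le {p q p' q' : ℂ} (h : ¬(p = 0 ∧ q = 0)) (h' : ¬(p' = 0 ∧ q' = 0)) :
    chordal (toSph p q) (toSph p' q') ≤ 2 * (‖p - p'‖ + ‖q - q'‖) / √(‖p'‖ ^ 2 + ‖q'‖ ^ 2) := by
  set N := √(‖p‖ ^ 2 + ‖q‖ ^ 2)
  have hN : 0 < N := Real.sqrt_pos.mpr (norm_sq_add_norm_sq_pos_iff.mpr h)
  have hN' : 0 < √(‖p'‖ ^ 2 + ‖q'‖ ^ 2) := Real.sqrt_pos.mpr (norm_sq_add_norm_sq_pos_iff.mpr h')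
  have hp : ‖p‖ ≤ N := Real.le_sqrt_of_sq_le (by nlinarith [sq_nonneg ‖q‖])
  have hq : ‖q‖ ≤ N := Real.le_sqrt_of_sq_le (by nlinarith [sq_nonneg ‖p‖])
  have hW : ‖p * q' - p' * q‖ ≤ N * (‖p - p'‖ + ‖q - q'‖) :=
    calc ‖p * q' - p' * q‖ = ‖p * (q' - q) + (p - p') * q‖ := by ring_nf
      _ ≤ ‖p‖ * ‖q' - q‖ + ‖p - p'‖ * ‖q‖ := by
        simpa only [norm_mul] using norm_add_le (p * (q' - q)) ((p - p') * q)
      _ ≤ N * (‖p - p'‖ + ‖q - q'‖) := by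
        rw [norm_sub_rev q']
        nlinarith [norm_nonneg (p - p'), norm_nonneg (q - q')]
  rw [chordal_toSph h h']
  calc 2 * ‖p * q' - p' * q‖ / (N * √(‖p'‖ ^ 2 + ‖q'‖ ^ 2))
      ≤ 2 * (N * (‖p - p'‖ + ‖q - q'‖)) / (N * √(‖p'‖ ^ 2 + ‖q'‖ ^ 2)) := by gcongr
    _ = 2 * (‖p - p'‖ + ‖q - q'‖) / √(‖p'‖ ^ 2 + ‖q'‖ ^ 2) := by field_simp


lemma norm_wronskian_div_mul_eq {p₁ q₁ p₂ q₂ p₃ q₃ : ℂ} (h₁ : ¬(p₁ = 0 ∧ q₁ = 0))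
    (h₂ : ¬(p₂ = 0 ∧ q₂ = 0)) (h₃ : ¬(p₃ = 0 ∧ q₃ = 0))
    (h₁₂ : p₁ * q₂ - p₂ * q₁ ≠ 0) (h₁₃ : p₁ * q₃ - p₃ * q₁ ≠ 0) :
    ‖(p₂ * q₃ - p₃ * q₂) / ((p₁ * q₂ - p₂ * q₁) * (p₁ * q₃ - p₃ * q₁))‖ *
        (‖p₁‖ ^ 2 + ‖q₁‖ ^ 2) =
      2 * chordal (toSph p₂ q₂) (toSph p₃ q₃) /
        (chordal (toSph p₁ q₁) (toSph p₂ q₂) * chordal (toSph p₁ q₁) (toSph p₃ q₃)) := by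
  have hN₁ := norm_sq_add_norm_sq_pos_iff.mpr h₁
  have hN₂ := Real.sqrt_pos.mpr (norm_sq_add_norm_sq_pos_iff.mpr h₂)
  have hN₃ := Real.sqrt_pos.mpr (norm_sq_add_norm_sq_pos_iff.mpr h₃)
  have := norm_pos_iff.mpr h₁₂
  have := norm_pos_iff.mpr h₁₃
  rw [chordal_toSph h₁ h₂, chordal_toSph h₁ h₃, chordal_toSph h₂ h₃, norm_div, norm_mul]
  field_simp
  rw [Real.sq_sqrt hN₁.le]

lemma mem_Icc_two_mul_div_mul {d x y z : ℝ} (hd : 0 < d) (hx : d ≤ x) (hx₂ : x ≤ 2)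
    (hy : d ≤ y) (hy₂ : y ≤ 2) (hz : d ≤ z) (hz₂ : z ≤ 2) :
    2 * z / (x * y) ∈ Set.Icc (d / 2) (4 / d ^ 2) := by
  have hxy : 0 < x * y := by nlinarith
  constructor
  · rw [div_le_div_iff₀ two_pos hxy]
    nlinarith [mul_le_mul hx₂ hy₂ (by linarith) zero_le_two]
  · rw [div_le_div_iff₀ hxy (by positivity)]
    nlinarith [mul_le_mul hx hy hd.le (by linarith)]

lemma sub_ne_zero_of_chordal_toSph_pos {p q p' q' : ℂ} (h : ¬(p = 0 ∧ q = 0))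
    (h' : ¬(p' = 0 ∧ q' = 0)) (hχ : 0 < chordal (toSph p q) (toSph p' q')) :
    p * q' - p' * q ≠ 0 := by
  intro hW
  rw [chordal_toSph h h', hW, norm_zero, mul_zero, zero_div] at hχ
  exact hχ.false

end Homogeneous

theorem exists_differentiableOn_exp_eq {Q : ℂ → ℂ} {c : ℂ} {r : ℝ}
    (hQ : DifferentiableOn ℂ Q (ball c r)) (hQ₀ : ∀ z ∈ ball c r, Q z ≠ 0) :
    ∃ L : ℂ → ℂ, DifferentiableOn ℂ L (ball c r) ∧ ∀ z ∈ ball c r, exp (L z) = Q z := by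
  rcases (ball c r).eq_empty_or_nonempty with hempty | ⟨z₀, hz₀⟩
  · exact ⟨0, by simp [hempty], by simp [hempty]⟩
  have hc : c ∈ ball c r := mem_ball_self (pos_of_mem_ball hz₀)
  have hQ' : ∀ z ∈ ball c r, HasDerivAt Q (deriv Q z) z := fun z hz =>
    (hQ.differentiableAt (isOpen_ball.mem_nhds hz)).hasDerivAt
  obtain ⟨L, hLc, hL⟩ := ((hQ.deriv isOpen_ball).div hQ hQ₀).isExactOn_ball.with_val_at c
    (log (Q c))
  have hLd : DifferentiableOn ℂ L (ball c r) := fun z hz =>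
    (hL z hz).differentiableAt.differentiableWithinAt
  -- `Q · exp (-L)` has derivative zero, hence is the constant `Q c · exp (-log (Q c)) = 1`.
  have hconst : ∀ z ∈ ball c r, Q z * exp (-L z) = Q c * exp (-L c) := fun z hz =>
    isOpen_ball.is_const_of_deriv_eq_zero (convex_ball c r).isPreconnected
      (hQ.mul hLd.neg.cexp) (fun w hw => by
        refine ((hQ' w hw).mul (hL w hw).neg.cexp).deriv.trans ?_
        simp only [Pi.neg_apply, Pi.div_apply, Pi.zero_apply]
        field_simp [hQ₀ w hw]
        ring) hz hc
  refine ⟨L, hLd, fun z hz => ?_⟩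
  have h := hconst z hz
  rw [hLc, exp_neg, exp_neg, exp_log (hQ₀ c hc), mul_inv_cancel₀ (hQ₀ c hc)] at h
  exact (eq_of_mul_inv_eq_one h).symm

theorem exists_toSph_eq_and_norm_sq_mem_Icc {c : ℂ} {r d : ℝ} {a b e : ℂ → OnePoint ℂ}
    (ha : MeromorphicOnSph (ball c r) a) (hb : MeromorphicOnSph (ball c r) b)
    (he : MeromorphicOnSph (ball c r) e) (hd : 0 < d)
    (hsep : ∀ z ∈ ball c r,
      d ≤ chordal (a z) (b z) ∧ d ≤ chordal (a z) (e z) ∧ d ≤ chordal (b z) (e z)) :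
    ∃ B D : ℂ → ℂ, DifferentiableOn ℂ B (ball c r) ∧ DifferentiableOn ℂ D (ball c r) ∧
      ∀ z ∈ ball c r,
        a z = toSph (B z) (D z) ∧ ‖B z‖ ^ 2 + ‖D z‖ ^ 2 ∈ Set.Icc (d / 2) (4 / d ^ 2) := by
  obtain ⟨f₁, g₁, hf₁, hg₁, h₁, ha⟩ := ha
  obtain ⟨f₂, g₂, hf₂, hg₂, h₂, hb⟩ := hb
  obtain ⟨f₃, g₃, hf₃, hg₃, h₃, he⟩ := he
  have hχ : ∀ z ∈ ball c r, d ≤ chordal (toSph (f₁ z) (g₁ z)) (toSph (f₂ z) (g₂ z)) ∧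
      d ≤ chordal (toSph (f₁ z) (g₁ z)) (toSph (f₃ z) (g₃ z)) ∧
      d ≤ chordal (toSph (f₂ z) (g₂ z)) (toSph (f₃ z) (g₃ z)) := fun z hz => by
    simpa only [ha z hz, hb z hz, he z hz] using hsep z hz
  have hW : ∀ z ∈ ball c r, f₁ z * g₂ z - f₂ z * g₁ z ≠ 0 ∧ f₁ z * g₃ z - f₃ z * g₁ z ≠ 0 ∧
      f₂ z * g₃ z - f₃ z * g₂ z ≠ 0 := fun z hz => by
    obtain ⟨h₁₂, h₁₃, h₂₃⟩ := hχ z hz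
    exact ⟨sub_ne_zero_of_chordal_toSph_pos (h₁ z hz) (h₂ z hz) (hd.trans_le h₁₂),
      sub_ne_zero_of_chordal_toSph_pos (h₁ z hz) (h₃ z hz) (hd.trans_le h₁₃),
      sub_ne_zero_of_chordal_toSph_pos (h₂ z hz) (h₃ z hz) (hd.trans_le h₂₃)⟩
  set Q : ℂ → ℂ := fun z => (f₂ z * g₃ z - f₃ z * g₂ z) /
    ((f₁ z * g₂ z - f₂ z * g₁ z) * (f₁ z * g₃ z - f₃ z * g₁ z))
  have hQ : DifferentiableOn ℂ Q (ball c r) :=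
    ((hf₂.mul hg₃).sub (hf₃.mul hg₂)).div (((hf₁.mul hg₂).sub (hf₂.mul hg₁)).mul
      ((hf₁.mul hg₃).sub (hf₃.mul hg₁))) fun z hz => mul_ne_zero (hW z hz).1 (hW z hz).2.1
  have hQ₀ : ∀ z ∈ ball c r, Q z ≠ 0 := fun z hz =>
    div_ne_zero (hW z hz).2.2 (mul_ne_zero (hW z hz).1 (hW z hz).2.1)
  obtain ⟨L, hL, hLQ⟩ := exists_differentiableOn_exp_eq hQ hQ₀
  have hs : DifferentiableOn ℂ (fun z => exp (L z / 2)) (ball c r) := (hL.div_const 2).cexp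
  refine ⟨fun z => exp (L z / 2) * f₁ z, fun z => exp (L z / 2) * g₁ z, hs.mul hf₁,
    hs.mul hg₁, fun z hz => ?_⟩
  have hsq : exp (L z / 2) ^ 2 = Q z := by
    rw [← exp_nat_mul, ← hLQ z hz]
    push_cast
    ring_nf
  have hnorm : ‖exp (L z / 2) * f₁ z‖ ^ 2 + ‖exp (L z / 2) * g₁ z‖ ^ 2 =
      ‖Q z‖ * (‖f₁ z‖ ^ 2 + ‖g₁ z‖ ^ 2) := by
    rw [norm_mul, norm_mul, mul_pow, mul_pow, ← mul_add, ← norm_pow, hsq]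
  obtain ⟨h₁₂, h₁₃, h₂₃⟩ := hχ z hz
  refine ⟨by rw [ha z hz, toSph_mul (exp_ne_zero _)], ?_⟩
  rw [hnorm, norm_wronskian_div_mul_eq (h₁ z hz) (h₂ z hz) (h₃ z hz) (hW z hz).1 (hW z hz).2.1]
  exact mem_Icc_two_mul_div_mul hd h₁₂ (chordal_le_two _ _) h₁₃ (chordal_le_two _ _) h₂₃
    (chordal_le_two _ _)

section Montel

variable {E : Type*} [NormedAddCommGroup E] [NormedSpace ℂ E]

/-- Cauchy's estimate `‖f'‖ ≤ 2C / (R/2)` on the half ball, integrated along segments. -/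
theorem norm_sub_le_of_forall_norm_le {f : ℂ → E} {c w : ℂ} {R C : ℝ}
    (hf : DifferentiableOn ℂ f (ball c R)) (hC : ∀ z ∈ ball c R, ‖f z‖ ≤ C)
    (hw : w ∈ ball c (R / 2)) :
    ‖f w - f c‖ ≤ 4 * C / R * ‖w - c‖ := by
  have hR : 0 < R / 2 := pos_of_mem_ball hw
  have hsub : ∀ x ∈ ball c (R / 2), ball x (R / 2) ⊆ ball c R := fun x hx =>
    ball_subset_ball' (by rw [mem_ball] at hx; linarith)
  refine (convex_ball c (R / 2)).norm_image_sub_le_of_norm_deriv_le (fun x hx => ?_)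
    (fun x hx => ?_) (mem_ball_self hR) hw
  · exact hf.differentiableAt (isOpen_ball.mem_nhds (hsub x hx (mem_ball_self hR)))
  · have hmaps : Set.MapsTo f (ball x (R / 2)) (closedBall (f x) (2 * C)) := fun y hy => by
      rw [mem_closedBall, dist_eq_norm]
      have := hC y (hsub x hx hy)
      have := hC x (hsub x hx (mem_ball_self hR))
      linarith [norm_sub_le (f y) (f x)]
    calc ‖deriv f x‖ ≤ 2 * C / (R / 2) :=
          Complex.norm_deriv_le_div_of_mapsTo_ball (hf.mono (hsub x hx)) hmaps hR
      _ = 4 * C / R := by ring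

theorem equicontinuousOn_of_forall_norm_le {ι : Type*} {U : Set ℂ} (hU : IsOpen U)
    {F : ι → ℂ → E} {C : ℝ} (hF : ∀ i, DifferentiableOn ℂ (F i) U)
    (hC : ∀ i, ∀ z ∈ U, ‖F i z‖ ≤ C) : EquicontinuousOn F U := by
  intro c hc
  obtain ⟨R, hR, hRU⟩ := Metric.isOpen_iff.mp hU c hc
  refine (Metric.equicontinuousAt_of_continuity_modulus (fun w => 4 * C / R * ‖w - c‖) ?_ F
    ?_).equicontinuousWithinAt U
  · simpa using (((continuous_sub_right c).norm.const_mul (4 * C / R)).tendsto c)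
  · filter_upwards [ball_mem_nhds c (half_pos hR)] with w hw i
    rw [dist_comm, dist_eq_norm]
    exact norm_sub_le_of_forall_norm_le ((hF i).mono hRU) (fun z hz => hC i z (hRU hz)) hw

theorem exists_subseq_tendstoUniformlyOn_of_forall_norm_le [ProperSpace E] {U : Set ℂ}
    (hU : IsOpen U) {F : ℕ → ℂ → E} {C : ℝ} (hF : ∀ n, DifferentiableOn ℂ (F n) U)
    (hC : ∀ n, ∀ z ∈ U, ‖F n z‖ ≤ C) :
    ∃ φ : ℕ → ℕ, StrictMono φ ∧ ∃ u : ℂ → E,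
      ∀ K ⊆ U, IsCompact K → TendstoUniformlyOn (fun n => F (φ n)) u atTop K := by
  let 𝔖 : Set (Set ℂ) := {K | K ⊆ U ∧ IsCompact K}
  have : IsCountablyGenerated (uniformity (ℂ →ᵤ[𝔖] E)) := by
    have := hU.locallyCompactSpace
    let K := CompactExhaustion.choice U
    refine UniformOnFun.isCountablyGenerated_uniformity 𝔖 (t := fun n => (↑) '' K n)
      (fun n => ⟨by simp, (K.isCompact n).image continuous_subtype_val⟩)
      (fun m n h => Set.image_mono (K.subset h)) ?_
    rintro S ⟨hSU, hS⟩
    obtain ⟨n, hn⟩ := K.exists_superset_of_isCompact (s := (↑) ⁻¹' S)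
      (Subtype.isCompact_iff.mpr (by rwa [Subtype.image_preimage_coe, Set.inter_eq_right.mpr hSU]))
    exact ⟨n, fun x hx => ⟨⟨x, hSU hx⟩, hn hx, rfl⟩⟩
  let G : ℕ → ℂ →ᵤ[𝔖] E := fun n => UniformOnFun.ofFun 𝔖 (F n)
  have hG : IsCompact (closure (Set.range G)) := by
    refine ArzelaAscoli.isCompact_closure_of_isClosedEmbedding (F := UniformOnFun.toFun 𝔖)
      (fun K hK => hK.2) .id (fun K hK => ?_) fun K hK x hx =>
        ⟨closedBall 0 C, isCompact_closedBall 0 C, ?_⟩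
    · have hFK := (equicontinuousOn_of_forall_norm_le hU hF hC).mono hK.1
      exact (equicontinuousOn_iff_range.mp hFK).comp fun g : Set.range G =>
        ⟨UniformOnFun.toFun 𝔖 g, by obtain ⟨_, n, rfl⟩ := g; exact ⟨n, rfl⟩⟩
    · rintro _ ⟨n, rfl⟩
      exact mem_closedBall_zero_iff.mpr (hC n x (hK.1 hx))
  obtain ⟨u, -, φ, hφ, hu⟩ := hG.tendsto_subseq fun n => subset_closure ⟨n, rfl⟩
  exact ⟨φ, hφ, UniformOnFun.toFun 𝔖 u, fun K hKU hK =>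
    UniformOnFun.tendsto_iff_tendstoUniformlyOn.mp hu K ⟨hKU, hK⟩⟩

end Montel

theorem TendstoUniformlyOn.eventually_sphDist_toSph_lt {ι : Type*} {l : Filter ι}
    {F : ι → ℂ → ℂ × ℂ} {u : ℂ → ℂ × ℂ} {K : Set ℂ} {m : ℝ} (hm : 0 < m)
    (h : TendstoUniformlyOn F u l K) (hF : ∀ i, ∀ z ∈ K, m ≤ ‖(F i z).1‖ ^ 2 + ‖(F i z).2‖ ^ 2)
    (hu : ∀ z ∈ K, m ≤ ‖(u z).1‖ ^ 2 + ‖(u z).2‖ ^ 2) {δ : ℝ} (hδ : 0 < δ) :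
    ∀ᶠ i in l, ∀ z ∈ K, sphDist (toSph (F i z).1 (F i z).2) (toSph (u z).1 (u z).2) < δ := by
  have hm' : 0 < √m := Real.sqrt_pos.mpr hm
  set η := δ * √m / (4 * π) with hη
  filter_upwards [Metric.tendstoUniformlyOn_iff.mp h η (by positivity)] with i hi z hz
  have hdist : dist (F i z) (u z) < η := dist_comm (u z) (F i z) ▸ hi z hz
  rw [Prod.dist_eq, max_lt_iff, dist_eq_norm, dist_eq_norm] at hdist
  have hχ := chordal_toSph_le (norm_sq_add_norm_sq_pos_iff.mp (hm.trans_le (hF i z hz)))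
    (norm_sq_add_norm_sq_pos_iff.mp (hm.trans_le (hu z hz)))
  calc sphDist (toSph (F i z).1 (F i z).2) (toSph (u z).1 (u z).2)
      ≤ π / 2 * (2 * (‖(F i z).1 - (u z).1‖ + ‖(F i z).2 - (u z).2‖) /
          √(‖(u z).1‖ ^ 2 + ‖(u z).2‖ ^ 2)) :=
        (sphDist_le_pi_div_two_mul_chordal _ _).trans (by gcongr)
    _ ≤ π / 2 * (2 * (η + η) / √m) := by
        gcongr
        · exact hdist.1.le
        · exact hdist.2.le
        · exact hu z hz
    _ = δ / 2 := by rw [hη]; field_simp; ring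
    _ < δ := half_lt_self hδ

theorem exists_subseq_tendsto_sphDist {c : ℂ} {r d : ℝ} {a b e : ℕ → ℂ → OnePoint ℂ}
    (ha : ∀ n, MeromorphicOnSph (ball c r) (a n)) (hb : ∀ n, MeromorphicOnSph (ball c r) (b n))
    (he : ∀ n, MeromorphicOnSph (ball c r) (e n)) (hd : 0 < d)
    (hsep : ∀ n, ∀ z ∈ ball c r,
      d ≤ chordal (a n z) (b n z) ∧ d ≤ chordal (a n z) (e n z) ∧ d ≤ chordal (b n z) (e n z)) :
    ∃ φ : ℕ → ℕ, StrictMono φ ∧ ∃ h : ℂ → OnePoint ℂ,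
      ∀ K ⊆ ball c r, IsCompact K → ∀ δ : ℝ, 0 < δ →
        ∀ᶠ n in atTop, ∀ z ∈ K, sphDist (a (φ n) z) (h z) < δ := by
  choose B D hB hD hBD using fun n =>
    exists_toSph_eq_and_norm_sq_mem_Icc (ha n) (hb n) (he n) hd (hsep n)
  have hbound : ∀ n, ∀ z ∈ ball c r, ‖(B n z, D n z)‖ ≤ 2 / d := fun n z hz => by
    have h := (hBD n z hz).2.2
    rw [norm_prod_le_iff, ← pow_le_pow_iff_left₀ (norm_nonneg _) (by positivity) two_ne_zero,
      ← pow_le_pow_iff_left₀ (norm_nonneg _) (by positivity) two_ne_zero, div_pow]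
    constructor <;> nlinarith [sq_nonneg ‖B n z‖, sq_nonneg ‖D n z‖]
  obtain ⟨φ, hφ, u, hu⟩ := exists_subseq_tendstoUniformlyOn_of_forall_norm_le isOpen_ball
    (fun n => (hB n).prodMk (hD n)) hbound
  have hu_lower : ∀ z ∈ ball c r, d / 2 ≤ ‖(u z).1‖ ^ 2 + ‖(u z).2‖ ^ 2 := fun z hz =>
    ge_of_tendsto
      ((((continuous_fst.norm.pow 2).add (continuous_snd.norm.pow 2)).tendsto (u z)).comp
        ((hu {z} (by simpa) isCompact_singleton).tendsto_at rfl))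
      (Eventually.of_forall fun n => (hBD (φ n) z hz).2.1)
  refine ⟨φ, hφ, fun z => toSph (u z).1 (u z).2, fun K hK hKc δ hδ => ?_⟩
  filter_upwards [(hu K hK hKc).eventually_sphDist_toSph_lt (half_pos hd)
    (fun n z hz => (hBD (φ n) z (hK hz)).2.1) (fun z hz => hu_lower z (hK hz)) hδ] with n hn z hz
  rw [(hBD (φ n) z (hK hz)).1]
  exact hn z hz

/-- If `𝒢` is a family of triples `(a,b,c)` of meromorphic (or `≡ ∞`) functions on the unit
disk whose mutual spherical distances have product at least `ε > 0` everywhere, then each of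
the three coordinate families is normal in the unit disk. -/
theorem stmt_15
    (G : Set ((ℂ → OnePoint ℂ) × (ℂ → OnePoint ℂ) × (ℂ → OnePoint ℂ)))
    (hmero : ∀ t ∈ G, MeromorphicOnSph (ball (0 : ℂ) 1) t.1 ∧
      MeromorphicOnSph (ball (0 : ℂ) 1) t.2.1 ∧ MeromorphicOnSph (ball (0 : ℂ) 1) t.2.2)
    (ε : ℝ) (hε : 0 < ε)
    (hsep : ∀ t ∈ G, ∀ z ∈ ball (0 : ℂ) 1,
      ε ≤ sphDist (t.1 z) (t.2.1 z) * sphDist (t.1 z) (t.2.2 z) *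
        sphDist (t.2.1 z) (t.2.2 z)) :
    (∀ a : ℕ → ℂ → OnePoint ℂ, (∀ n, ∃ b c, (a n, b, c) ∈ G) →
      ∃ φ : ℕ → ℕ, StrictMono φ ∧ ∃ h : ℂ → OnePoint ℂ,
        ∀ K : Set ℂ, K ⊆ ball (0 : ℂ) 1 → IsCompact K → ∀ δ : ℝ, 0 < δ →
          ∀ᶠ n in atTop, ∀ z ∈ K, sphDist (a (φ n) z) (h z) < δ) ∧
    (∀ b : ℕ → ℂ → OnePoint ℂ, (∀ n, ∃ a c, (a, b n, c) ∈ G) →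
      ∃ φ : ℕ → ℕ, StrictMono φ ∧ ∃ h : ℂ → OnePoint ℂ,
        ∀ K : Set ℂ, K ⊆ ball (0 : ℂ) 1 → IsCompact K → ∀ δ : ℝ, 0 < δ →
          ∀ᶠ n in atTop, ∀ z ∈ K, sphDist (b (φ n) z) (h z) < δ) ∧
    (∀ c : ℕ → ℂ → OnePoint ℂ, (∀ n, ∃ a b, (a, b, c n) ∈ G) →
      ∃ φ : ℕ → ℕ, StrictMono φ ∧ ∃ h : ℂ → OnePoint ℂ,
        ∀ K : Set ℂ, K ⊆ ball (0 : ℂ) 1 → IsCompact K → ∀ δ : ℝ, 0 < δ →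
          ∀ᶠ n in atTop, ∀ z ∈ K, sphDist (c (φ n) z) (h z) < δ) := by
  have hd : 0 < 2 * ε / π ^ 3 := by positivity
  have hχ := fun t ht z hz => le_chordal_pairwise_of_le_sphDist_mul (hsep t ht z hz)
  refine ⟨fun a ha => ?_, fun b hb => ?_, fun c hc => ?_⟩
  · choose b c hG using ha
    exact exists_subseq_tendsto_sphDist (fun n => (hmero _ (hG n)).1)
      (fun n => (hmero _ (hG n)).2.1) (fun n => (hmero _ (hG n)).2.2) hd
      fun n z hz => hχ _ (hG n) z hz
  · choose a c hG using hb
    refine exists_subseq_tendsto_sphDist (fun n => (hmero _ (hG n)).2.1)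
      (fun n => (hmero _ (hG n)).1) (fun n => (hmero _ (hG n)).2.2) hd fun n z hz => ?_
    obtain ⟨h₁₂, h₁₃, h₂₃⟩ := hχ _ (hG n) z hz
    exact ⟨chordal_comm (a n z) _ ▸ h₁₂, h₂₃, h₁₃⟩
  · choose a b hG using hc
    refine exists_subseq_tendsto_sphDist (fun n => (hmero _ (hG n)).2.2)
      (fun n => (hmero _ (hG n)).1) (fun n => (hmero _ (hG n)).2.1) hd fun n z hz => ?_
    obtain ⟨h₁₂, h₁₃, h₂₃⟩ := hχ _ (hG n) z hz
    exact ⟨chordal_comm (a n z) _ ▸ h₁₃, chordal_comm (b n z) _ ▸ h₂₃, h₁₂⟩
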